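/- arXiv:1202.4816 — 2 statements merged into one kernel-verified Lean document; each statement's English description precedes it below -/
import Mathlib

section
/- Let {p, q, r} be a Farey triple with p < q < r (in the order on ℚ∞ in which ∞ is the greatest element). Then 2q⊖p = q⊕r, 2q⊖r = q⊕p, and 2p⊖q = 2r⊖q = p⊖r, where for x, y ∈ ℚ∞ one defines 2x⊖y to be the element of ℚ∞ represented by the fraction (2d(x)−d(y))/(2r(x)−r(y)). -/
/-- `ℚ∞ = ℚ ∪ {∞}`, ordered with `∞ = ⊤` as the greatest element. -/
abbrev QInf : Type := WithTop ℚ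

/-- The numerator `d(q)` of the reduced representation `q = d(q)/r(q)`; `d(∞) = 1`. -/
def fnum : QInf → ℤ := WithTop.recTopCoe 1 (fun q => q.num)

/-- The denominator `r(q)` of the reduced representation `q = d(q)/r(q)`; `r(∞) = 0`. -/
def fden : QInf → ℤ := WithTop.recTopCoe 0 (fun q => (q.den : ℤ))

/-- The element of `ℚ∞` represented by the fraction `a / b`: it is `∞` if `b = 0`,
and otherwise the rational number `a / b` (normalized so that the denominator is
positive and the fraction is in lowest terms). -/
def fmk (a b : ℤ) : QInf := if b = 0 then (⊤ : QInf) else (((a : ℚ) / (b : ℚ)) : ℚ)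

/-- The Farey distance `Δ(p,q) = |d(p)r(q) - d(q)r(p)|`. -/
def fdist (p q : QInf) : ℤ := |fnum p * fden q - fnum q * fden p|

/-- `p` and `q` are Farey neighbours if `Δ(p,q) = 1`. -/
def FareyNbr (p q : QInf) : Prop := fdist p q = 1

/-- The Farey sum `p ⊕ q = (d(p) + d(q)) / (r(p) + r(q))`. -/
def fsum (p q : QInf) : QInf := fmk (fnum p + fnum q) (fden p + fden q)

/-- The Farey difference `p ⊖ q = (d(p) - d(q)) / (r(p) - r(q))`. -/
def fdiff (p q : QInf) : QInf := fmk (fnum p - fnum q) (fden p - fden q)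

/-- A Farey triple: a three-element subset of `ℚ∞` whose elements are pairwise
Farey neighbours. -/
def IsFareyTriple (s : Set QInf) : Prop := s.ncard = 3 ∧ s.Pairwise FareyNbr

/-- The element replacing `p` in the mutation of the Farey triple `{p, q, r}` in
direction `p`: it is `q ⊖ r` if `p` lies strictly between `q` and `r`, and `q ⊕ r`
otherwise. -/
def fareyMutEl (p q r : QInf) : QInf :=
  if (q < p ∧ p < r) ∨ (r < p ∧ p < q) then fdiff q r else fsum q r

/-- The mutation of the Farey triple `{p, q, r}` in direction `p`. -/
def fareyMut (p q r : QInf) : Set QInf := {fareyMutEl p q r, q, r}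

/-- The complexity `c(q) = |d(q)| + r(q) + |d(q) - r(q)|`. -/
def complexity (x : QInf) : ℤ := |fnum x| + fden x + |fnum x - fden x|

/-- For `x, y ∈ ℚ∞`, the element `2x ⊖ y` of `ℚ∞` represented by the fraction
`(2 d(x) - d(y)) / (2 r(x) - r(y))`. -/
def twoSub (x y : QInf) : QInf := fmk (2 * fnum x - fnum y) (2 * fden x - fden y)

/-! Ordered Farey neighbours `x < y` have signed determinant `d(x)r(y) - d(y)r(x) = -1`, and three
vectors `(d, r) ∈ ℤ²` with pairwise determinants `-1` satisfy `q = p + r`: the middle element of the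
triple is the Farey sum of the outer two. Each identity is then linear in the coordinates. -/

/-- The signed Farey distance: `fdist p q = |fdet p q|`. -/
def fdet (p q : QInf) : ℤ := fnum p * fden q - fnum q * fden p

theorem fdet_neg_of_lt {p q : QInf} (h : p < q) : fdet p q < 0 := by
  lift p to ℚ using h.ne_top
  induction q using WithTop.recTopCoe with
  | top => simpa [fdet, fnum, fden] using p.pos
  | coe q =>
    have hlt := (Rat.lt_iff p q).1 (WithTop.coe_lt_coe.1 h)
    simp only [fdet, fnum, fden, WithTop.recTopCoe_coe]
    linarith

theorem FareyNbr.fdet_eq_neg_one {p q : QInf} (hn : FareyNbr p q) (h : p < q) :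
    fdet p q = -1 := by
  change |fdet p q| = 1 at hn
  rw [abs_of_neg (fdet_neg_of_lt h)] at hn
  omega

/-- From `fdet p r • q = fdet q r • p + fdet p q • r` (Cramer's rule in `ℤ²`). -/
theorem fnum_fden_eq_add_of_fdet_eq_neg_one {p q r : QInf} (hpq : fdet p q = -1)
    (hqr : fdet q r = -1) (hpr : fdet p r = -1) :
    fnum q = fnum p + fnum r ∧ fden q = fden p + fden r := by
  unfold fdet at hpq hqr hpr
  constructor
  · linear_combination fnum q * hpr - fnum p * hqr - fnum r * hpq
  · linear_combination fden q * hpr - fden p * hqr - fden r * hpq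

theorem fmk_neg_neg (a b : ℤ) : fmk (-a) (-b) = fmk a b := by
  by_cases hb : b = 0
  · simp [fmk, hb]
  · simp [fmk, hb, neg_div_neg_eq]

/-- If `{p, q, r}` is a Farey triple with `p < q < r`, then `2q ⊖ p = q ⊕ r`,
`2q ⊖ r = q ⊕ p`, and `2p ⊖ q = 2r ⊖ q = p ⊖ r`. -/
theorem fareyTriple_twoSub_identities (p q r : QInf)
    (hpq : p < q) (hqr : q < r)
    (h1 : FareyNbr p q) (h2 : FareyNbr p r) (h3 : FareyNbr q r) :
    twoSub q p = fsum q r ∧ twoSub q r = fsum q p ∧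
      twoSub p q = fdiff p r ∧ twoSub r q = fdiff p r := by
  obtain ⟨hnum, hden⟩ := fnum_fden_eq_add_of_fdet_eq_neg_one (h1.fdet_eq_neg_one hpq)
    (h3.fdet_eq_neg_one hqr) (h2.fdet_eq_neg_one (hpq.trans hqr))
  refine ⟨?_, ?_, ?_, ?_⟩
  · rw [twoSub, fsum, hnum, hden]; congr 1 <;> ring
  · rw [twoSub, fsum, hnum, hden]; congr 1 <;> ring
  · rw [twoSub, fdiff, hnum, hden]; congr 1 <;> ring
  · rw [twoSub, fdiff, ← fmk_neg_neg, hnum, hden]; congr 1 <;> ring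
end

section
/- Every Farey triple can be obtained from the Farey triple {1, 0, ∞} by a finite sequence of mutations. -/
/-- `t` is obtained from `s` by a single mutation of Farey triples. -/
def MutStep (s t : Set QInf) : Prop :=
  ∃ p q r : QInf, p ≠ q ∧ p ≠ r ∧ q ≠ r ∧ s = {p, q, r} ∧ t = fareyMut p q r

/-!
Identify `x ∈ ℚ∞` with its primitive vector `(d(x), r(x)) ∈ ℤ²`. Farey neighbours are
unimodular pairs, so in a Farey triple `{p, q, r}` the vector of `p` is `±(v_q + t v_r)` with
`t = ±1`, and mutation in direction `p` replaces `t` by `-t`. Measure each element by the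
Eisenstein norm `N(a, b) = a² - ab + b²`. The parallelogram law
`N(u + v) + N(u - v) = 2 N(u) + 2 N(v)` and the discriminant identity
`4 N(u) N(v) - (N(u + v) - N(u) - N(v))² = 3 det(u, v)²` show that mutating an element of
largest norm strictly decreases its norm unless all three norms are `1`, and the only Farey
triple of norms `1` is `{0, 1, ∞}`.
-/

def eisensteinNorm (a b : ℤ) : ℤ := a ^ 2 - a * b + b ^ 2

lemma eisensteinNorm_nonneg (a b : ℤ) : 0 ≤ eisensteinNorm a b := by
  unfold eisensteinNorm
  nlinarith [sq_nonneg (a - b), sq_nonneg a, sq_nonneg b]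

lemma eisensteinNorm_mul_of_isUnit {s : ℤ} (hs : IsUnit s) (a b : ℤ) :
    eisensteinNorm (s * a) (s * b) = eisensteinNorm a b := by
  unfold eisensteinNorm
  linear_combination (a ^ 2 - a * b + b ^ 2) * Int.isUnit_sq hs

lemma eisensteinNorm_sub_lt_add {a b c d : ℤ} (hdet : IsUnit (a * d - b * c))
    (hu : eisensteinNorm a b ≤ eisensteinNorm (a + c) (b + d))
    (hv : eisensteinNorm c d ≤ eisensteinNorm (a + c) (b + d))
    (hlarge : 1 < eisensteinNorm (a + c) (b + d)) :
    eisensteinNorm (a - c) (b - d) < eisensteinNorm (a + c) (b + d) := by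
  have hx := eisensteinNorm_nonneg a b
  have hy := eisensteinNorm_nonneg c d
  set x := eisensteinNorm a b
  set y := eisensteinNorm c d
  set z := eisensteinNorm (a + c) (b + d)
  have hparallelogram : z + eisensteinNorm (a - c) (b - d) = 2 * x + 2 * y := by
    simp only [x, y, z, eisensteinNorm]; ring
  have hdisc : 4 * x * y - (z - x - y) ^ 2 = 3 := by
    simp only [x, y, z, eisensteinNorm]
    linear_combination 3 * Int.isUnit_sq hdet
  by_contra! hge
  have hm : z - x - y ≤ 0 := by linarith
  -- `0 ≤ x + y - z ≤ min x y`, from `z ≤ N(a - c, b - d)` and the maximality of `z`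
  have hxy : (z - x - y) ^ 2 ≤ x * y := by nlinarith
  have hxy1 : x * y = 1 := by nlinarith
  have : x = 1 := Int.eq_one_of_mul_eq_one_right hx hxy1
  have : y = 1 := Int.eq_one_of_mul_eq_one_left hy hxy1
  nlinarith

@[simp] lemma fnum_top : fnum ⊤ = 1 := rfl
@[simp] lemma fden_top : fden ⊤ = 0 := rfl
@[simp] lemma fnum_coe (q : ℚ) : fnum q = q.num := rfl
@[simp] lemma fden_coe (q : ℚ) : fden q = q.den := rfl

lemma fmk_fnum_fden (x : QInf) : fmk (fnum x) (fden x) = x := by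
  cases x using WithTop.recTopCoe with
  | top => simp [fmk]
  | coe q => simp [fmk, Rat.num_div_den]

lemma fmk_mul_of_isUnit {s : ℤ} (hs : IsUnit s) (a b : ℤ) : fmk (s * a) (s * b) = fmk a b := by
  rcases Int.isUnit_iff.mp hs with rfl | rfl
  · simp
  · by_cases hb : b = 0 <;> simp [fmk, hb, neg_div_neg_eq]

lemma exists_fnum_fmk_eq {a b : ℤ} (h : IsCoprime a b) :
    ∃ s : ℤ, IsUnit s ∧ fnum (fmk a b) = s * a ∧ fden (fmk a b) = s * b := by
  have hcop : a.natAbs.Coprime b.natAbs := Int.isCoprime_iff_gcd_eq_one.mp h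
  rcases lt_trichotomy b 0 with hb | rfl | hb
  · refine ⟨-1, isUnit_one.neg, ?_⟩
    rw [← fmk_mul_of_isUnit isUnit_one.neg]
    simp only [fmk, neg_one_mul, neg_eq_zero, hb.ne, if_false, fnum_coe, fden_coe]
    have hcop' : (-a).natAbs.Coprime (-b).natAbs := by simpa using hcop
    have hnum := Rat.num_div_eq_of_coprime (by omega) hcop'
    have hden := Rat.den_div_eq_of_coprime (by omega) hcop'
    push_cast at hnum hden
    exact ⟨hnum, hden⟩
  · refine ⟨a, isCoprime_zero_right.mp h, ?_, by simp [fmk]⟩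
    simpa [fmk] using (Int.isUnit_mul_self (isCoprime_zero_right.mp h)).symm
  · refine ⟨1, isUnit_one, ?_⟩
    simp only [fmk, hb.ne', if_false, fnum_coe, fden_coe, one_mul]
    exact ⟨Rat.num_div_eq_of_coprime hb hcop, Rat.den_div_eq_of_coprime hb hcop⟩

lemma lt_iff_fnum_mul_fden_lt {x y : QInf} : x < y ↔ fnum x * fden y < fnum y * fden x := by
  cases x using WithTop.recTopCoe with
  | top => cases y using WithTop.recTopCoe <;> simp
  | coe p =>
    cases y using WithTop.recTopCoe with
    | top => simpa using p.pos
    | coe q => simpa using Rat.lt_iff p q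

lemma FareyNbr.symm {p q : QInf} (h : FareyNbr p q) : FareyNbr q p := by
  rwa [FareyNbr, fdist, abs_sub_comm]

lemma FareyNbr.ne {p q : QInf} (h : FareyNbr p q) : p ≠ q := by
  rintro rfl
  simp [FareyNbr, fdist] at h

lemma FareyNbr.isUnit {p q : QInf} (h : FareyNbr p q) :
    IsUnit (fnum p * fden q - fnum q * fden p) :=
  Int.isUnit_iff_abs_eq.mpr h

lemma fareyNbr_of_isUnit {p q : QInf} (h : IsUnit (fnum p * fden q - fnum q * fden p)) :
    FareyNbr p q :=
  Int.isUnit_iff_abs_eq.mp h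

def fnorm (x : QInf) : ℤ := eisensteinNorm (fnum x) (fden x)

lemma fnorm_nonneg (x : QInf) : 0 ≤ fnorm x := eisensteinNorm_nonneg _ _

def fcomb (q r : QInf) (t : ℤ) : QInf := fmk (fnum q + t * fnum r) (fden q + t * fden r)

lemma fsum_eq_fcomb (q r : QInf) : fsum q r = fcomb q r 1 := by
  simp [fsum, fcomb]

lemma fdiff_eq_fcomb (q r : QInf) : fdiff q r = fcomb q r (-1) := by
  simp [fdiff, fcomb, sub_eq_add_neg]

section fcomb

variable {q r : QInf} {t : ℤ}

lemma FareyNbr.exists_fnum_fcomb_eq (h : FareyNbr q r) :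
    ∃ s : ℤ, IsUnit s ∧ fnum (fcomb q r t) = s * (fnum q + t * fnum r) ∧
      fden (fcomb q r t) = s * (fden q + t * fden r) := by
  obtain ⟨u, hu⟩ := h.isUnit.exists_right_inv
  refine exists_fnum_fmk_eq ⟨u * fden r, -(u * fnum r), ?_⟩
  linear_combination hu

lemma FareyNbr.fcomb_left (h : FareyNbr q r) (ht : IsUnit t) : FareyNbr (fcomb q r t) q := by
  obtain ⟨s, hs, hnum, hden⟩ := h.exists_fnum_fcomb_eq (t := t)
  apply fareyNbr_of_isUnit
  rw [hnum, hden, show s * (fnum q + t * fnum r) * fden q - fnum q * (s * (fden q + t * fden r))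
    = -(s * t * (fnum q * fden r - fnum r * fden q)) by ring]
  exact ((hs.mul ht).mul h.isUnit).neg

lemma FareyNbr.fcomb_right (h : FareyNbr q r) : FareyNbr (fcomb q r t) r := by
  obtain ⟨s, hs, hnum, hden⟩ := h.exists_fnum_fcomb_eq (t := t)
  apply fareyNbr_of_isUnit
  rw [hnum, hden, show s * (fnum q + t * fnum r) * fden r - fnum r * (s * (fden q + t * fden r))
    = s * (fnum q * fden r - fnum r * fden q) by ring]
  exact hs.mul h.isUnit

lemma FareyNbr.fnorm_fcomb (h : FareyNbr q r) :
    fnorm (fcomb q r t) = eisensteinNorm (fnum q + t * fnum r) (fden q + t * fden r) := by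
  obtain ⟨s, hs, hnum, hden⟩ := h.exists_fnum_fcomb_eq (t := t)
  rw [fnorm, hnum, hden, eisensteinNorm_mul_of_isUnit hs]

lemma FareyNbr.between_fcomb_iff (h : FareyNbr q r) (ht : IsUnit t) :
    ((q < fcomb q r t ∧ fcomb q r t < r) ∨ (r < fcomb q r t ∧ fcomb q r t < q)) ↔ t = 1 := by
  obtain ⟨s, hs, hnum, hden⟩ := h.exists_fnum_fcomb_eq (t := t)
  set e := s * (fnum q * fden r - fnum r * fden q)
  have he : IsUnit e := hs.mul h.isUnit
  simp only [lt_iff_fnum_mul_fden_lt, hnum, hden]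
  have h1 : fnum q * (s * (fden q + t * fden r)) - s * (fnum q + t * fnum r) * fden q = t * e := by
    ring
  have h2 : s * (fnum q + t * fnum r) * fden r - fnum r * (s * (fden q + t * fden r)) = e := by
    ring
  rcases Int.isUnit_iff.mp ht with rfl | rfl <;> rcases Int.isUnit_iff.mp he with he' | he' <;>
    rw [he'] at h1 h2 <;> omega

lemma FareyNbr.fareyMutEl_fcomb (h : FareyNbr q r) (ht : IsUnit t) :
    fareyMutEl (fcomb q r t) q r = fcomb q r (-t) := by
  unfold fareyMutEl
  rcases Int.isUnit_iff.mp ht with rfl | rfl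
  · rw [if_pos ((h.between_fcomb_iff ht).mpr rfl), fdiff_eq_fcomb]
  · rw [if_neg (by simp [h.between_fcomb_iff ht]), fsum_eq_fcomb, neg_neg]

lemma FareyNbr.fnorm_fcomb_neg_lt (h : FareyNbr q r) (ht : IsUnit t)
    (hq : fnorm q ≤ fnorm (fcomb q r t)) (hr : fnorm r ≤ fnorm (fcomb q r t))
    (hlarge : 1 < fnorm (fcomb q r t)) :
    fnorm (fcomb q r (-t)) < fnorm (fcomb q r t) := by
  rw [fnorm, ← eisensteinNorm_mul_of_isUnit ht] at hr
  simp only [h.fnorm_fcomb, neg_mul, ← sub_eq_add_neg] at hq hr hlarge ⊢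
  refine eisensteinNorm_sub_lt_add ?_ hq hr hlarge
  rw [show fnum q * (t * fden r) - fden q * (t * fnum r) = t * (fnum q * fden r - fnum r * fden q)
    by ring]
  exact ht.mul h.isUnit

end fcomb

lemma exists_eq_fcomb {p q r : QInf} (hpq : FareyNbr p q) (hpr : FareyNbr p r)
    (hqr : FareyNbr q r) : ∃ t : ℤ, IsUnit t ∧ p = fcomb q r t := by
  -- Cramer's rule: `v_p = m v_q + n v_r` with unit coefficients, so `v_p = m (v_q + m n v_r)`.
  set D := fnum q * fden r - fnum r * fden q
  set m := D * (fnum p * fden r - fnum r * fden p)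
  set n := D * (fnum q * fden p - fnum p * fden q)
  have hm : IsUnit m := hqr.isUnit.mul hpr.isUnit
  have hn : IsUnit n := hqr.isUnit.mul hpq.symm.isUnit
  refine ⟨m * n, hm.mul hn, ?_⟩
  rw [fcomb, ← fmk_mul_of_isUnit hm, ← fmk_fnum_fden p]
  congr 1
  · linear_combination
      (-fnum p) * Int.isUnit_mul_self hqr.isUnit + (-n * fnum r) * Int.isUnit_mul_self hm
  · linear_combination
      (-fden p) * Int.isUnit_mul_self hqr.isUnit + (-n * fden r) * Int.isUnit_mul_self hm

lemma exists_mutStep_of_fnorm_le {p q r : QInf} (hpq : FareyNbr p q) (hpr : FareyNbr p r)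
    (hqr : FareyNbr q r) (hq : fnorm q ≤ fnorm p) (hr : fnorm r ≤ fnorm p) (hp : 1 < fnorm p) :
    ∃ p', FareyNbr p' q ∧ FareyNbr p' r ∧ fnorm p' < fnorm p ∧ MutStep {p', q, r} {p, q, r} := by
  obtain ⟨t, ht, rfl⟩ := exists_eq_fcomb hpq hpr hqr
  have hleft := hqr.fcomb_left ht.neg
  have hright := hqr.fcomb_right (t := -t)
  refine ⟨fcomb q r (-t), hleft, hright, hqr.fnorm_fcomb_neg_lt ht hq hr hp,
    _, q, r, hleft.ne, hright.ne, hqr.ne, rfl, ?_⟩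
  rw [fareyMut, hqr.fareyMutEl_fcomb ht.neg, neg_neg]

lemma exists_mutStep_fnorm_add_lt {p q r : QInf} (hpq : FareyNbr p q) (hpr : FareyNbr p r)
    (hqr : FareyNbr q r) (hlarge : 1 < fnorm p ∨ 1 < fnorm q ∨ 1 < fnorm r) :
    ∃ p' q' r', FareyNbr p' q' ∧ FareyNbr p' r' ∧ FareyNbr q' r' ∧
      fnorm p' + fnorm q' + fnorm r' < fnorm p + fnorm q + fnorm r ∧
      MutStep {p', q', r'} {p, q, r} := by
  by_cases hp : fnorm q ≤ fnorm p ∧ fnorm r ≤ fnorm p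
  · obtain ⟨p', h1, h2, hlt, hstep⟩ := exists_mutStep_of_fnorm_le hpq hpr hqr hp.1 hp.2 (by omega)
    exact ⟨p', q, r, h1, h2, hqr, by omega, hstep⟩
  by_cases hq : fnorm p ≤ fnorm q ∧ fnorm r ≤ fnorm q
  · obtain ⟨q', h1, h2, hlt, hstep⟩ :=
      exists_mutStep_of_fnorm_le hpq.symm hqr hpr hq.1 hq.2 (by omega)
    refine ⟨q', p, r, h1, h2, hpr, by omega, ?_⟩
    rwa [Set.insert_comm p q]
  have hr : fnorm p ≤ fnorm r ∧ fnorm q ≤ fnorm r := by omega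
  obtain ⟨r', h1, h2, hlt, hstep⟩ :=
    exists_mutStep_of_fnorm_le hpr.symm hqr.symm hpq hr.1 hr.2 (by omega)
  refine ⟨r', p, q, h1, h2, hpq, by omega, ?_⟩
  rwa [Set.pair_comm q r, Set.insert_comm p r]

lemma eq_zero_or_eq_one_or_eq_top_of_fnorm_le_one {x : QInf} (hx : fnorm x ≤ 1) :
    x = 0 ∨ x = 1 ∨ x = ⊤ := by
  cases x using WithTop.recTopCoe with
  | top => simp
  | coe q =>
    simp only [fnorm, eisensteinNorm, fnum_coe, fden_coe] at hx
    have hden : q.den = 1 := by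
      have := q.pos
      nlinarith [sq_nonneg (2 * q.num - q.den)]
    have hnum : q.num = 0 ∨ q.num = 1 := by
      rw [hden] at hx
      push_cast at hx
      have : 0 ≤ q.num := by nlinarith
      have : q.num ≤ 1 := by nlinarith
      omega
    rw [← Rat.coe_int_num_of_den_eq_one hden]
    rcases hnum with h | h <;> simp [h]

lemma eq_base_of_fnorm_le_one {p q r : QInf} (hpq : FareyNbr p q) (hpr : FareyNbr p r)
    (hqr : FareyNbr q r) (hp : fnorm p ≤ 1) (hq : fnorm q ≤ 1) (hr : fnorm r ≤ 1) :
    ({p, q, r} : Set QInf) = {1, 0, ⊤} := by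
  refine Set.eq_of_subset_of_ncard_le ?_ ?_ (Set.toFinite _)
  · rintro x (rfl | rfl | rfl) <;>
      simpa [or_comm, or_left_comm] using eq_zero_or_eq_one_or_eq_top_of_fnorm_le_one ‹_›
  · rw [Set.ncard_eq_three.mpr ⟨p, q, r, hpq.ne, hpr.ne, hqr.ne, rfl⟩]
    exact (Set.ncard_eq_three.mpr ⟨1, 0, ⊤, by simp, by simp, by simp, rfl⟩).le

lemma reachable_of_fnorm_add_lt (n : ℕ) {p q r : QInf} (hpq : FareyNbr p q) (hpr : FareyNbr p r)
    (hqr : FareyNbr q r) (hn : fnorm p + fnorm q + fnorm r < n) :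
    Relation.ReflTransGen MutStep {1, 0, ⊤} {p, q, r} := by
  induction n generalizing p q r with
  | zero =>
    push_cast at hn
    linarith [fnorm_nonneg p, fnorm_nonneg q, fnorm_nonneg r]
  | succ n ih =>
    by_cases hsmall : fnorm p ≤ 1 ∧ fnorm q ≤ 1 ∧ fnorm r ≤ 1
    · rw [eq_base_of_fnorm_le_one hpq hpr hqr hsmall.1 hsmall.2.1 hsmall.2.2]
    obtain ⟨p', q', r', h1, h2, h3, hlt, hstep⟩ :=
      exists_mutStep_fnorm_add_lt hpq hpr hqr (by omega)
    exact (ih h1 h2 h3 (by omega)).tail hstep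

theorem fareyTriple_reachable_general (p q r : QInf)
    (h1 : FareyNbr p q) (h2 : FareyNbr p r) (h3 : FareyNbr q r) :
    Relation.ReflTransGen MutStep ({1, 0, ⊤} : Set QInf) {p, q, r} :=
  reachable_of_fnorm_add_lt ((fnorm p + fnorm q + fnorm r).toNat + 1) h1 h2 h3 (by omega)

/-- Every Farey triple can be obtained from the Farey triple `{1, 0, ∞}` by a finite
sequence of mutations. -/
theorem fareyTriple_reachable (p q r : QInf)
    (hpq : p ≠ q) (hpr : p ≠ r) (hqr : q ≠ r)
    (h1 : FareyNbr p q) (h2 : FareyNbr p r) (h3 : FareyNbr q r) :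
    Relation.ReflTransGen MutStep ({1, 0, ⊤} : Set QInf) {p, q, r} :=
  fareyTriple_reachable_general p q r h1 h2 h3
end
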